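/- Let h(x) = min_{C ∈ E} max_{(a,v) ∈ C} (a + ⟨v,x⟩) with E a finite nonempty family of convex polytopes in ℝ × ℝⁿ. If there exists C ∈ E with C ∩ L₀ = ∅ (no point of C has zero ℝⁿ-component), then h is unbounded from below on ℝⁿ. -/

import Mathlib

/-!
Pick `C` with `C ∩ L₀ = ∅`. The projection `K` of `C` to `ℝⁿ` is compact, convex and misses `0`,
so some `y` separates it strictly from `0`: `⟪v, y⟫ ≥ u > 0` on `K`. Along the ray `x = -t • y` every
affine function `a + ⟪v, x⟫` with `(a, v) ∈ C` is at most `A - t u`, where `A` bounds the first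
coordinates on `C`; hence so is the maximum over `C`, and `h` lies below it.
-/

open scoped RealInnerProductSpace

section

variable {E : Type*} [NormedAddCommGroup E] [InnerProductSpace ℝ E]

noncomputable def maxAffine (C : Set (ℝ × E)) (x : E) : ℝ :=
  sSup ((fun p : ℝ × E => p.1 + ⟪p.2, x⟫) '' C)

theorem exists_pos_lt_inner_of_zero_notMem [CompleteSpace E] {K : Set E} (hconv : Convex ℝ K)
    (hclosed : IsClosed K) (h0 : (0 : E) ∉ K) :
    ∃ y : E, ∃ u : ℝ, 0 < u ∧ ∀ v ∈ K, u < ⟪v, y⟫ := by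
  obtain ⟨f, u, hf0, hfK⟩ := geometric_hahn_banach_point_closed hconv hclosed h0
  refine ⟨(InnerProductSpace.toDual ℝ E).symm f, u, by simpa using hf0, fun v hv => ?_⟩
  rw [real_inner_comm, InnerProductSpace.toDual_symm_apply]
  exact hfK v hv

theorem maxAffine_neg_smul_le {C : Set (ℝ × E)} (hne : C.Nonempty) {A u t : ℝ} {y : E}
    (hA : ∀ p ∈ C, p.1 ≤ A) (hu : ∀ p ∈ C, u ≤ ⟪p.2, y⟫) (ht : 0 ≤ t) :
    maxAffine C (-t • y) ≤ A - t * u := by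
  refine csSup_le (hne.image _) ?_
  rintro _ ⟨p, hp, rfl⟩
  have hinner : ⟪p.2, -t • y⟫ = -(t * ⟪p.2, y⟫) := by
    rw [real_inner_smul_right, neg_mul]
  have : t * u ≤ t * ⟪p.2, y⟫ := mul_le_mul_of_nonneg_left (hu p hp) ht
  simp only [hinner]
  linarith [hA p hp]

theorem exists_maxAffine_lt [CompleteSpace E] {C : Set (ℝ × E)} (hne : C.Nonempty)
    (hconv : Convex ℝ C) (hcomp : IsCompact C) (hsep : ∀ a : ℝ, (a, (0 : E)) ∉ C) (M : ℝ) :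
    ∃ x, maxAffine C x < M := by
  have h0 : (0 : E) ∉ Prod.snd '' C := by
    rintro ⟨⟨a, v⟩, hp, rfl⟩
    exact hsep a hp
  obtain ⟨y, u, hu, hyu⟩ := exists_pos_lt_inner_of_zero_notMem
    (hconv.linear_image (LinearMap.snd ℝ ℝ E)) (hcomp.image continuous_snd).isClosed h0
  obtain ⟨A, hA⟩ := (hcomp.image continuous_fst).bddAbove
  set t := (|A - M| + 1) / u
  have htu : t * u = |A - M| + 1 := div_mul_cancel₀ _ hu.ne'
  refine ⟨-t • y, (maxAffine_neg_smul_le hne (fun p hp => hA ⟨p, hp, rfl⟩)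
    (fun p hp => (hyu p.2 ⟨p, hp, rfl⟩).le) (by positivity)).trans_lt ?_⟩
  linarith [le_abs_self (A - M)]

end

theorem stmt_2_general {n : ℕ} {ι : Type*} [Fintype ι]
    (C : ι → Set (ℝ × EuclideanSpace ℝ (Fin n)))
    (hne : ∀ j, (C j).Nonempty) (hconv : ∀ j, Convex ℝ (C j))
    (hcomp : ∀ j, IsCompact (C j))
    (h : EuclideanSpace ℝ (Fin n) → ℝ)
    (hh : ∀ x, h x = ⨅ j, sSup ((fun p : ℝ × EuclideanSpace ℝ (Fin n) =>
      p.1 + ⟪p.2, x⟫) '' C j))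
    (hsep : ∃ j, ∀ a : ℝ, (a, (0 : EuclideanSpace ℝ (Fin n))) ∉ C j) :
    ∀ M : ℝ, ∃ x, h x < M := by
  intro M
  obtain ⟨j, hj⟩ := hsep
  obtain ⟨x, hx⟩ := exists_maxAffine_lt (hne j) (hconv j) (hcomp j) hj M
  refine ⟨x, lt_of_le_of_lt ?_ hx⟩
  rw [hh]
  exact ciInf_le (Finite.bddBelow_range _) j

theorem stmt_2 {n : ℕ} {ι : Type*} [Fintype ι] [Nonempty ι]
    (C : ι → Set (ℝ × EuclideanSpace ℝ (Fin n)))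
    (hne : ∀ j, (C j).Nonempty) (hconv : ∀ j, Convex ℝ (C j))
    (hcomp : ∀ j, IsCompact (C j))
    (h : EuclideanSpace ℝ (Fin n) → ℝ)
    (hh : ∀ x, h x = ⨅ j, sSup ((fun p : ℝ × EuclideanSpace ℝ (Fin n) =>
      p.1 + ⟪p.2, x⟫) '' C j))
    (hsep : ∃ j, ∀ a : ℝ, (a, (0 : EuclideanSpace ℝ (Fin n))) ∉ C j) :
    ∀ M : ℝ, ∃ x, h x < M :=
  stmt_2_general C hne hconv hcomp h hh hsep
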